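/- Let k ∈ ℕ and let p : ℝⁿ → ℂ be a continuous function such that for every multi-index a ∈ ℕⁿ with |a| ≤ k there is a constant C_a with |η^a p(η)| ≤ C_a (1 + ‖η‖_H)^{−d_H − 1} for all η ∈ ℝⁿ. Then p is Lebesgue integrable on ℝⁿ and the function f(ξ) = ∫_{ℝⁿ} e^{2πi⟨ξ,η⟩} p(η) dη is of class C^k on ℝⁿ. -/

import Mathlib

open scoped BigOperators

/-- Homogeneous norm `‖η‖_H = max_i |η_i|^(1/d_i)`. -/
noncomputable def hnorm {n : ℕ} (d : Fin n → ℕ) (η : Fin n → ℝ) : ℝ :=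
  ⨆ i, |η i| ^ ((d i : ℝ)⁻¹)

/-- Monomial `η^a = ∏ i, η i ^ a i`. -/
def mono {n : ℕ} (a : Fin n → ℕ) (η : Fin n → ℝ) : ℝ := ∏ i, η i ^ a i

/-- The standard pairing `⟨ξ, η⟩ = ∑ i, ξ i * η i` on `ℝⁿ`. -/
def dotp {n : ℕ} (ξ η : Fin n → ℝ) : ℝ := ∑ i, ξ i * η i

/-!
By the multinomial theorem `(∑ i, |η i|) ^ m` is a combination of the `|η ^ a|` with `|a| = m`,
so for `m ≤ k` the decay hypotheses bound `‖η‖ ^ m * ‖p η‖` by a multiple of the weight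
`(1 + ‖η‖_H) ^ (-d_H - 1)`. The weight is integrable: since `|η i| ^ (1 / d i) ≤ ‖η‖_H`, it is
dominated by `∏ i, (1 + |η i| ^ (1 / d i)) ^ (-(d i + δ))` for small `δ > 0`, a product of
integrable functions of one variable. Hence `p` has integrable moments up to order `k`, and
differentiating under the integral sign makes its Fourier transform `C^k`.
-/

open MeasureTheory Finset
open scoped FourierTransform

section HomogeneousNorm

variable {n : ℕ} (d : Fin n → ℕ)

lemma hnorm_nonneg (η : Fin n → ℝ) : 0 ≤ hnorm d η :=
  Real.iSup_nonneg fun _ => Real.rpow_nonneg (abs_nonneg _) _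

lemma abs_rpow_inv_le_hnorm (η : Fin n → ℝ) (i : Fin n) :
    |η i| ^ (d i : ℝ)⁻¹ ≤ hnorm d η :=
  le_ciSup (f := fun j => |η j| ^ (d j : ℝ)⁻¹) (Set.finite_range _).bddAbove i

lemma measurable_hnorm : Measurable (hnorm d) :=
  Measurable.iSup fun i => ((measurable_pi_apply i).abs).pow_const _

end HomogeneousNorm

lemma integrable_one_add_abs_rpow_inv_rpow_neg {r c : ℝ} (hr : 1 ≤ r) (hc : r < c) :
    Integrable fun t : ℝ => (1 + |t| ^ r⁻¹) ^ (-c) := by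
  have hr0 : 0 < r := one_pos.trans_le hr
  have hdom : Integrable fun t : ℝ => (1 + ‖t‖) ^ (-(c / r)) :=
    integrable_one_add_norm (by simpa using (one_lt_div hr0).2 hc)
  refine hdom.mono' (by fun_prop : Measurable _).aestronglyMeasurable
    (Filter.Eventually.of_forall fun t => ?_)
  have hsub : (1 + |t|) ^ r⁻¹ ≤ 1 + |t| ^ r⁻¹ := by
    simpa using Real.rpow_add_le_add_rpow zero_le_one (abs_nonneg t) (inv_nonneg.2 hr0.le)
      (inv_le_one_of_one_le₀ hr)
  rw [Real.norm_of_nonneg (by positivity)]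
  calc (1 + |t| ^ r⁻¹) ^ (-c) ≤ ((1 + |t|) ^ r⁻¹) ^ (-c) :=
        Real.rpow_le_rpow_of_nonpos (by positivity) hsub (by linarith)
    _ = (1 + ‖t‖) ^ (-(c / r)) := by
        rw [← Real.rpow_mul (by positivity), Real.norm_eq_abs, inv_mul_eq_div, neg_div]

lemma integrable_one_add_hnorm_rpow_neg {n : ℕ} (d : Fin n → ℕ) (hd : ∀ i, 1 ≤ d i) {s : ℝ}
    (hs : ((∑ i, d i : ℕ) : ℝ) < s) :
    Integrable fun η : Fin n → ℝ => (1 + hnorm d η) ^ (-s) := by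
  -- dividing by `n + 1` rather than `n` keeps `n * δ ≤ s - ∑ i, d i` true for `n = 0`
  set δ : ℝ := (s - (∑ i, d i : ℕ)) / (n + 1)
  have hδ : 0 < δ := div_pos (sub_pos.2 hs) (by positivity)
  have hsum : ∑ i, ((d i : ℝ) + δ) ≤ s := by
    have : (n : ℝ) * δ ≤ s - (∑ i, d i : ℕ) := by
      linarith [mul_div_cancel₀ (s - (∑ i, d i : ℕ)) (by positivity : (n : ℝ) + 1 ≠ 0)]
    simp only [sum_add_distrib, sum_const, card_univ, Fintype.card_fin, nsmul_eq_mul]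
    push_cast at this ⊢
    linarith
  have hprod : Integrable fun η : Fin n → ℝ =>
      ∏ i, (1 + |η i| ^ (d i : ℝ)⁻¹) ^ (-((d i : ℝ) + δ)) :=
    Integrable.fintype_prod fun i => integrable_one_add_abs_rpow_inv_rpow_neg
      (by exact_mod_cast hd i) (lt_add_of_pos_right _ hδ)
  refine hprod.mono' ((measurable_const.add (measurable_hnorm d)).pow_const _).aestronglyMeasurable
    (Filter.Eventually.of_forall fun η => ?_)
  have h1 : 1 ≤ 1 + hnorm d η := le_add_of_nonneg_right (hnorm_nonneg d η)
  rw [Real.norm_of_nonneg (by positivity)]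
  calc (1 + hnorm d η) ^ (-s) ≤ (1 + hnorm d η) ^ (-∑ i, ((d i : ℝ) + δ)) :=
        Real.rpow_le_rpow_of_exponent_le h1 (neg_le_neg hsum)
    _ = ∏ i, (1 + hnorm d η) ^ (-((d i : ℝ) + δ)) := by
        rw [← sum_neg_distrib, Real.rpow_sum_of_pos (by positivity)]
    _ ≤ ∏ i, (1 + |η i| ^ (d i : ℝ)⁻¹) ^ (-((d i : ℝ) + δ)) :=
        prod_le_prod (fun i _ => by positivity) fun i _ =>
          Real.rpow_le_rpow_of_nonpos (by positivity)
            (add_le_add_right (abs_rpow_inv_le_hnorm d η i) 1) (by linarith)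

lemma sum_abs_pow_eq_sum_multinomial_mul_abs_mono {n : ℕ} (η : Fin n → ℝ) (m : ℕ) :
    (∑ i, |η i|) ^ m = ∑ a ∈ piAntidiag univ m, (Nat.multinomial univ a : ℝ) * |mono a η| := by
  simp only [sum_pow_eq_sum_piAntidiag, mono, abs_prod, abs_pow]

lemma integrable_sum_abs_pow_mul_norm {n : ℕ} {p : (Fin n → ℝ) → ℂ} {w : (Fin n → ℝ) → ℝ}
    (hp : AEStronglyMeasurable p) (hw : Integrable w) {m : ℕ}
    (hdecay : ∀ a ∈ piAntidiag univ m, ∃ C : ℝ, ∀ η, ‖(mono a η : ℂ) * p η‖ ≤ C * w η) :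
    Integrable fun η => (∑ i, |η i|) ^ m * ‖p η‖ := by
  have hterm : ∀ a ∈ piAntidiag univ m, Integrable fun η => ‖(mono a η : ℂ) * p η‖ := by
    intro a ha
    obtain ⟨C, hC⟩ := hdecay a ha
    have hmono : Continuous (mono a) := by unfold mono; fun_prop
    refine (hw.const_mul C).mono'
      ((Complex.continuous_ofReal.comp hmono).aestronglyMeasurable.mul hp).norm
      (Filter.Eventually.of_forall fun η => ?_)
    simpa using hC η
  refine (integrable_finsetSum _ fun a ha =>
    (hterm a ha).const_mul (Nat.multinomial univ a : ℝ)).congr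
    (Filter.Eventually.of_forall fun η => ?_)
  dsimp only
  rw [sum_abs_pow_eq_sum_multinomial_mul_abs_mono, sum_mul]
  refine sum_congr rfl fun a _ => ?_
  rw [norm_mul, Complex.norm_real, Real.norm_eq_abs, mul_assoc]

lemma EuclideanSpace.norm_le_sum_abs {ι : Type*} [Fintype ι] (v : EuclideanSpace ℝ ι) :
    ‖v‖ ≤ ∑ i, |v i| := by
  rw [EuclideanSpace.norm_eq, ← Real.sqrt_sq (sum_nonneg fun i _ => abs_nonneg (v i))]
  exact Real.sqrt_le_sqrt (by
    simpa only [Real.norm_eq_abs] using sum_sq_le_sq_sum_of_nonneg fun i _ => abs_nonneg (v i))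

lemma fourierInv_comp_ofLp_toLp {n : ℕ} (p : (Fin n → ℝ) → ℂ) (ξ : Fin n → ℝ) :
    𝓕⁻ (fun v : EuclideanSpace ℝ (Fin n) => p v.ofLp) (WithLp.toLp 2 ξ) =
      ∫ η : Fin n → ℝ, Complex.exp (2 * (Real.pi : ℂ) * Complex.I * (dotp ξ η : ℝ)) * p η := by
  rw [Real.fourierInv_eq', ← (PiLp.volume_preserving_ofLp (Fin n)).integral_comp
    (MeasurableEquiv.toLp 2 (Fin n → ℝ)).symm.measurableEmbedding]
  refine integral_congr_ae (Filter.Eventually.of_forall fun v => ?_)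
  simp only [smul_eq_mul, PiLp.inner_apply, RCLike.inner_apply, conj_trivial, dotp]
  push_cast
  ring_nf

lemma contDiff_integral_exp_dotp_mul {n : ℕ} {p : (Fin n → ℝ) → ℂ} (hp : AEStronglyMeasurable p)
    {N : ℕ∞} (hmoment : ∀ m : ℕ, m ≤ N → Integrable fun η => (∑ i, |η i|) ^ m * ‖p η‖) :
    ContDiff ℝ N fun ξ : Fin n → ℝ =>
      ∫ η : Fin n → ℝ, Complex.exp (2 * (Real.pi : ℂ) * Complex.I * (dotp ξ η : ℝ)) * p η := by
  set q : EuclideanSpace ℝ (Fin n) → ℂ := fun v => p v.ofLp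
  have hofLp := PiLp.volume_preserving_ofLp (Fin n)
  have hq : ∀ m : ℕ, m ≤ N → Integrable fun v => ‖v‖ ^ m * ‖q v‖ := by
    intro m hm
    have hmE : Integrable fun v : EuclideanSpace ℝ (Fin n) => (∑ i, |v i|) ^ m * ‖q v‖ :=
      (hofLp.integrable_comp_emb
        (MeasurableEquiv.toLp 2 (Fin n → ℝ)).symm.measurableEmbedding).2 (hmoment m hm)
    refine hmE.mono' ?_ (Filter.Eventually.of_forall fun v => ?_)
    · exact (continuous_norm.pow m).aestronglyMeasurable.mul
        (hofLp.aestronglyMeasurable_comp_iff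
          (MeasurableEquiv.toLp 2 (Fin n → ℝ)).symm.measurableEmbedding |>.2 hp).norm
    · rw [Real.norm_of_nonneg (by positivity)]
      gcongr
      exact EuclideanSpace.norm_le_sum_abs v
  have hFq : ContDiff ℝ N (𝓕⁻ q) := by
    rw [funext (Real.fourierInv_eq_fourier_neg q)]
    exact (Real.contDiff_fourier hq).comp contDiff_neg
  convert hFq.comp PiLp.contDiff_toLp using 1
  exact funext fun ξ => (fourierInv_comp_ofLp_toLp p ξ).symm

theorem stmt11 {n : ℕ} (d : Fin n → ℕ) (hd : ∀ i, 1 ≤ d i) (k : ℕ)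
    (p : (Fin n → ℝ) → ℂ) (hp : Continuous p)
    (hdecay : ∀ a : Fin n → ℕ, (∑ i, a i) ≤ k → ∃ C : ℝ, ∀ η : Fin n → ℝ,
      ‖(mono a η : ℂ) * p η‖ ≤
        C * (1 + hnorm d η) ^ (-(∑ i, d i : ℕ) - 1 : ℝ)) :
    MeasureTheory.Integrable p ∧
    ContDiff ℝ (k : ℕ∞)
      (fun ξ : Fin n → ℝ => ∫ η : Fin n → ℝ,
        Complex.exp (2 * (Real.pi : ℂ) * Complex.I * (dotp ξ η : ℝ)) * p η) := by
  have hw := integrable_one_add_hnorm_rpow_neg d hd (s := (∑ i, d i : ℕ) + 1) (lt_add_one _)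
  rw [neg_add'] at hw
  have hmoment : ∀ m : ℕ, m ≤ k → Integrable fun η => (∑ i, |η i|) ^ m * ‖p η‖ :=
    fun m hm => integrable_sum_abs_pow_mul_norm hp.aestronglyMeasurable hw fun a ha =>
      hdecay a ((mem_piAntidiag.1 ha).1.trans_le hm)
  refine ⟨?_, contDiff_integral_exp_dotp_mul hp.aestronglyMeasurable fun m hm =>
    hmoment m (by exact_mod_cast hm)⟩
  exact (integrable_norm_iff hp.aestronglyMeasurable).1 (by simpa using hmoment 0 k.zero_le)
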